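/- Let n ≥ 2 and let x_1,…,x_n : ℝ → ℝ be functions, each differentiable at 0, whose values x_1(0),…,x_n(0) are pairwise distinct, strictly positive, and sum to 1. Suppose that for all t in a neighbourhood of 0 the ratios e_j(x(t))/e_1(x(t)) remain equal to their values at t = 0 for every j ∈ {2,…,n}, while 1/e_1(x(t)) = 1 + t. Then the function t ↦ −∑_{k=1}^n x_k(t)·ln(x_k(t)) is differentiable at 0 with derivative equal to 1 − Q, where Q = −∑_{k=1}^n (x_k(0)^n · ln x_k(0)) / P_k and P_k = ∏_{i≠k}(x_k(0) − x_i(0)). (Equivalently: viewing the Shannon entropy S as a function of t_1 = 1/s_1, t_2 = s_2/s_1, …, t_n = s_n/s_1, at points with s_1 = 1 the subentropy is Q = 1 − ∂S/∂t_1.) -/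

import Mathlib

/-!
Along the curve all of `e_1, …, e_n` are multiplied by the common factor `a t = 1/(1 + t)`.
For a fixed root `y_k = x_k(0)`, the polynomial identity `∏ i, (1 + c z_i) = ∑ j, c ^ j e_j(z)`
with `c = -1/y_k` then gives `∏ i, (1 + c x_i(t)) = 1 - a t`; differentiating at `0`, where
only the `k`-th factor vanishes, yields `x_k'(0) = a'(0) y_k ^ n / ∏_{i ≠ k} (y_k - y_i)`.
Since `d/dt (-x log x) = -x' (log x + 1)` and `∑ x_k' = a'(0) = -1`, the derivative of the
entropy is `1 - Q`.
-/

noncomputable def esymm (n j : ℕ) (x : Fin n → ℝ) : ℝ :=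
  ∑ s ∈ Finset.powersetCard j (Finset.univ : Finset (Fin n)), ∏ u ∈ s, x u

open Finset Filter Topology

section Esymm

variable {n : ℕ}

lemma esymm_zero (z : Fin n → ℝ) : esymm n 0 z = 1 := by
  simp [esymm]

lemma esymm_one (z : Fin n → ℝ) : esymm n 1 z = ∑ k, z k := by
  simp [esymm, powersetCard_one]

lemma prod_one_add_mul_eq_sum_esymm (c : ℝ) (z : Fin n → ℝ) :
    ∏ i, (1 + c * z i) = ∑ j ∈ range (n + 1), c ^ j * esymm n j z := by
  simp_rw [add_comm (1 : ℝ)]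
  rw [prod_add, sum_powerset, card_univ, Fintype.card_fin]
  refine sum_congr rfl fun j _ => ?_
  rw [esymm, mul_sum]
  refine sum_congr rfl fun s hs => ?_
  rw [prod_mul_distrib, prod_const, (mem_powersetCard.mp hs).2]
  simp

lemma prod_one_add_mul_sub_one_of_esymm_eq_mul (c a : ℝ) {w z : Fin n → ℝ}
    (h : ∀ j, 1 ≤ j → j ≤ n → esymm n j w = a * esymm n j z) :
    ∏ i, (1 + c * w i) - 1 = a * (∏ i, (1 + c * z i) - 1) := by
  simp only [prod_one_add_mul_eq_sum_esymm, sum_range_succ', esymm_zero, pow_zero, mul_one,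
    add_sub_cancel_right, mul_sum]
  refine sum_congr rfl fun j hj => ?_
  rw [h (j + 1) (by omega) (by simpa using hj)]
  ring

end Esymm

lemma HasDerivAt.finset_prod_of_eq_zero {𝕜 ι : Type*} [NontriviallyNormedField 𝕜]
    [DecidableEq ι] {u : Finset ι} {f : ι → 𝕜 → 𝕜} {f' : ι → 𝕜} {x : 𝕜}
    (hf : ∀ i ∈ u, HasDerivAt (f i) (f' i) x) {k : ι} (hk : k ∈ u) (hzero : f k x = 0) :
    HasDerivAt (fun t => ∏ i ∈ u, f i t) ((∏ i ∈ u.erase k, f i x) * f' k) x := by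
  refine (HasDerivAt.fun_finsetProd hf).congr_deriv ?_
  rw [← sum_erase_add _ _ hk, sum_eq_zero, zero_add, smul_eq_mul]
  intro i hi
  rw [prod_eq_zero (mem_erase.mpr ⟨(ne_of_mem_erase hi).symm, hk⟩) hzero, zero_smul]

theorem hasDerivAt_of_esymm_eq_mul {n : ℕ} {x : Fin n → ℝ → ℝ} {a : ℝ → ℝ}
    {a' t₀ : ℝ} (hx : ∀ i, DifferentiableAt ℝ (x i) t₀) (ha : HasDerivAt a a' t₀)
    (hscale : ∀ᶠ t in 𝓝 t₀, ∀ j, 1 ≤ j → j ≤ n →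
      esymm n j (fun i => x i t) = a t * esymm n j (fun i => x i t₀))
    {k : Fin n} (hk : x k t₀ ≠ 0) (hsimple : ∀ i, i ≠ k → x i t₀ ≠ x k t₀) :
    HasDerivAt (x k) (a' * x k t₀ ^ n / ∏ i ∈ univ.erase k, (x k t₀ - x i t₀)) t₀ := by
  refine (hx k).hasDerivAt.congr_deriv ?_
  set d := fun i => deriv (x i) t₀
  set y := fun i => x i t₀
  change d k = a' * y k ^ n / ∏ i ∈ univ.erase k, (y k - y i)
  replace hk : y k ≠ 0 := hk
  set c := -(y k)⁻¹ with hc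
  clear_value c
  have hcy : c * y k = -1 := by simp [hc, hk]
  have hroot : 1 + c * y k = 0 := by rw [hcy]; ring
  have hprod : (fun t => ∏ i, (1 + c * x i t)) =ᶠ[𝓝 t₀] fun t => 1 - a t := by
    filter_upwards [hscale] with t ht
    have := prod_one_add_mul_sub_one_of_esymm_eq_mul c (a t) ht
    rw [prod_eq_zero (f := fun i => 1 + c * y i) (mem_univ k) hroot] at this
    linarith
  have hderiv : (∏ i ∈ univ.erase k, (1 + c * y i)) * (c * d k) = -a' :=
    (HasDerivAt.finset_prod_of_eq_zero
      (fun i _ => ((hx i).hasDerivAt.const_mul c).const_add 1)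
      (mem_univ k) hroot).unique ((hprod.hasDerivAt_iff).mpr (ha.const_sub 1))
  -- `1 + c y_i = (y_k - y_i) / y_k`, and `∏_{i ≠ k} y_k * y_k = y_k ^ n`.
  have hfactor : (∏ i ∈ univ.erase k, (1 + c * y i)) * y k ^ n
      = (∏ i ∈ univ.erase k, (y k - y i)) * y k := by
    have hpow : y k ^ n = (∏ _i ∈ univ.erase k, y k) * y k := by
      rw [prod_erase_mul _ _ (mem_univ k), prod_const, card_univ, Fintype.card_fin]
    rw [hpow, ← mul_assoc, ← prod_mul_distrib]
    congr 2 with i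
    linear_combination y i * hcy
  have hP : ∏ i ∈ univ.erase k, (y k - y i) ≠ 0 :=
    prod_ne_zero_iff.mpr fun i hi => sub_ne_zero.mpr (hsimple i (ne_of_mem_erase hi)).symm
  rw [eq_div_iff hP]
  apply mul_left_cancel₀ hk
  linear_combination -d k * hfactor + (∏ i ∈ univ.erase k, (1 + c * y i)) * d k * y k ^ n * hcy
    - y k ^ (n + 1) * hderiv

lemma HasDerivAt.neg_sum_mul_log {ι : Type*} {u : Finset ι} {f : ι → ℝ → ℝ}
    {f' : ι → ℝ} {x : ℝ} (hf : ∀ i ∈ u, HasDerivAt (f i) (f' i) x)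
    (hne : ∀ i ∈ u, f i x ≠ 0) :
    HasDerivAt (fun t => -∑ i ∈ u, f i t * Real.log (f i t))
      (-∑ i ∈ u, f' i * (Real.log (f i x) + 1)) x := by
  refine (HasDerivAt.fun_sum fun i hi =>
    (hf i hi).mul ((hf i hi).log (hne i hi))).neg.congr_deriv ?_
  congr 1
  refine sum_congr rfl fun i hi => ?_
  field_simp [hne i hi]

lemma eventually_esymm_eq_inv_mul {n : ℕ} {x : Fin n → ℝ → ℝ}
    (hfix : ∀ᶠ t in 𝓝 0, ∀ j, 2 ≤ j → j ≤ n →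
      esymm n j (fun k => x k t) / esymm n 1 (fun k => x k t)
        = esymm n j (fun k => x k 0) / esymm n 1 (fun k => x k 0))
    (he1 : ∀ᶠ t in 𝓝 0, esymm n 1 (fun k => x k t) = (1 + t)⁻¹) :
    ∀ᶠ t in 𝓝 0, ∀ j, 1 ≤ j → j ≤ n →
      esymm n j (fun k => x k t) = (1 + t)⁻¹ * esymm n j (fun k => x k 0) := by
  have he1_zero : esymm n 1 (fun k => x k 0) = 1 := by simpa using he1.self_of_nhds
  filter_upwards [hfix, he1, eventually_ne_nhds (show (0 : ℝ) ≠ -1 by norm_num)]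
    with t hft he1t ht j hj1 hjn
  obtain rfl | hj2 := hj1.eq_or_lt
  · rw [he1t, he1_zero, mul_one]
  have hne : esymm n 1 (fun k => x k t) ≠ 0 := by
    rw [he1t]
    exact inv_ne_zero fun h => ht (by linarith)
  rw [← he1t, mul_comm, ← div_eq_iff hne, hft j hj2 hjn, he1_zero, div_one]

lemma hasDerivAt_inv_one_add : HasDerivAt (fun t : ℝ => (1 + t)⁻¹) (-1) 0 := by
  have := ((hasDerivAt_id (0 : ℝ)).const_add 1).fun_inv (by norm_num)
  norm_num at this
  exact this

theorem stmt_14_general (n : ℕ) (x : Fin n → ℝ → ℝ)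
    (hdiff : ∀ k, DifferentiableAt ℝ (x k) 0)
    (hdist : ∀ k l, k ≠ l → x k 0 ≠ x l 0)
    (hpos : ∀ k, 0 < x k 0)
    (hfix : ∀ᶠ t in nhds (0 : ℝ), ∀ j, 2 ≤ j → j ≤ n →
      esymm n j (fun k => x k t) / esymm n 1 (fun k => x k t)
        = esymm n j (fun k => x k 0) / esymm n 1 (fun k => x k 0))
    (hvar : ∀ᶠ t in nhds (0 : ℝ), 1 / esymm n 1 (fun k => x k t) = 1 + t) :
    HasDerivAt (fun t => -∑ k, x k t * Real.log (x k t))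
      (1 - (-∑ k, (x k 0) ^ n * Real.log (x k 0) /
          ∏ i ∈ Finset.univ.erase k, (x k 0 - x i 0))) 0 := by
  have he1 : ∀ᶠ t in 𝓝 0, esymm n 1 (fun k => x k t) = (1 + t)⁻¹ := by
    filter_upwards [hvar] with t ht
    rw [← ht, one_div, inv_inv]
  have hscale := eventually_esymm_eq_inv_mul hfix he1
  have hvel : ∀ k, HasDerivAt (x k)
      (-(x k 0 ^ n) / ∏ i ∈ univ.erase k, (x k 0 - x i 0)) 0 := fun k =>
    (hasDerivAt_of_esymm_eq_mul hdiff hasDerivAt_inv_one_add hscale (hpos k).ne'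
      fun i hi => hdist i k hi).congr_deriv (by ring)
  have hsum : ∑ k, -(x k 0 ^ n) / ∏ i ∈ univ.erase k, (x k 0 - x i 0) = -1 := by
    refine (HasDerivAt.fun_sum fun k _ => hvel k).unique
      (hasDerivAt_inv_one_add.congr_of_eventuallyEq ?_)
    filter_upwards [he1] with t ht
    rw [← ht, esymm_one]
  refine (HasDerivAt.neg_sum_mul_log (fun k _ => hvel k) fun k _ => (hpos k).ne').congr_deriv ?_
  have hlog : ∑ k, (-(x k 0 ^ n) / ∏ i ∈ univ.erase k, (x k 0 - x i 0)) * Real.log (x k 0)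
      = -∑ k, x k 0 ^ n * Real.log (x k 0) / ∏ i ∈ univ.erase k, (x k 0 - x i 0) := by
    rw [← sum_neg_distrib]
    exact sum_congr rfl fun k _ => by ring
  rw [← hlog]
  simp only [mul_add, mul_one, sum_add_distrib, hsum]
  ring

/-- Viewing the Shannon entropy `S` as a function of `t_1 = 1/s_1, t_2 = s_2/s_1, …,
t_n = s_n/s_1`, at points with `s_1 = 1` one has `∂S/∂t_1 = 1 − Q`, where `Q` is the
subentropy. -/
theorem stmt_14 (n : ℕ) (hn : 2 ≤ n) (x : Fin n → ℝ → ℝ)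
    (hdiff : ∀ k, DifferentiableAt ℝ (x k) 0)
    (hdist : ∀ k l, k ≠ l → x k 0 ≠ x l 0)
    (hpos : ∀ k, 0 < x k 0)
    (hsum : ∑ k, x k 0 = 1)
    (hfix : ∀ᶠ t in nhds (0 : ℝ), ∀ j, 2 ≤ j → j ≤ n →
      esymm n j (fun k => x k t) / esymm n 1 (fun k => x k t)
        = esymm n j (fun k => x k 0) / esymm n 1 (fun k => x k 0))
    (hvar : ∀ᶠ t in nhds (0 : ℝ), 1 / esymm n 1 (fun k => x k t) = 1 + t) :
    HasDerivAt (fun t => -∑ k, x k t * Real.log (x k t))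
      (1 - (-∑ k, (x k 0) ^ n * Real.log (x k 0) /
          ∏ i ∈ Finset.univ.erase k, (x k 0 - x i 0))) 0 :=
  stmt_14_general n x hdiff hdist hpos hfix hvar
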